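/- arXiv:1305.3900 — 2 statements merged into one kernel-verified Lean document; each statement's English description precedes it below -/
import Mathlib

section
/- Let M be the structure monoid of a finite RC-quasigroup of size n and class p. Define, for u, u' ∈ ℕⁿ, u ≡_p u' iff the x-coordinates of u and u' are congruent mod p for every x ∈ X, and for g, g' ∈ M, g ≡ g' iff ν⁻¹(g) ≡_p ν⁻¹(g'). Then ≡ is an equivalence relation on M compatible with left- and right-multiplication, i.e., a congruence. -/
/-!
Write `ν⁻¹(gh) = ν⁻¹(g) + ν⁻¹(h) ∘ π(ν⁻¹ g)`. Compatibility with left multiplication is then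
immediate, and compatibility with right multiplication reduces to `π(u)` depending only on `u`
mod `p`. Comparing `ν(e_x + e_a) = x · π(e_x)(a)` with the relation `x(x ⊳ y) = y(y ⊳ x)` and
using injectivity of `ν` gives `π(e_x) = (x ⊳ -)`; the cocycle identity for `π` then gives
`π(n e_x) = Π(x, …, x, -)`, which is the identity for `n = p` by the class hypothesis. Hence
adding `p e_x` to `u` does not change `π(u)`, and neither does adding any element of `p ℕⁿ`.
-/

/-- `PiAux op l y` is `Π_{r+1}(x₁, ..., x_r, y)` where `l = [x_r, ..., x₁]`. -/
def PiAux {X : Type*} (op : X → X → X) : List X → X → X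
  | [], y => y
  | a :: l, y => op (PiAux op l a) (PiAux op l y)

/-- `SigmaRev op l` is the list of letters of the word `Σ_r(x₁, ..., x_r)` for
`l = [x_r, ..., x₁]` the reversed argument list. -/
def SigmaRev {X : Type*} (op : X → X → X) : List X → List X
  | [] => []
  | a :: l => SigmaRev op l ++ [PiAux op l a]

/-- The defining relations `x(x ⊳ y) = y(y ⊳ x)` of the structure monoid of `(X, ⊳)`. -/
def structRels {X : Type*} (op : X → X → X) : FreeMonoid X → FreeMonoid X → Prop :=
  fun a b => ∃ x y : X,
    a = FreeMonoid.of x * FreeMonoid.of (op x y) ∧ b = FreeMonoid.of y * FreeMonoid.of (op y x)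

open Function

theorem Pi.single_comp_perm_symm {X M : Type*} [DecidableEq X] [Zero M] (σ : Equiv.Perm X)
    (x : X) (m : M) :
    (fun z => (Pi.single x m : X → M) (σ.symm z)) = (Pi.single (σ x) m : X → M) := by
  ext z
  simp only [Pi.single_apply, Equiv.symm_apply_eq]

section Cocycle

variable {X : Type*} {π : (X → ℕ) → Equiv.Perm X}

theorem perm_zero
    (hπ : ∀ (u v : X → ℕ) (x : X), π (u + v) x = π (fun z => v ((π u).symm z)) (π u x)) :
    π 0 = 1 := by
  ext x
  have h := hπ 0 0 x
  rw [add_zero] at h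
  exact (π 0).injective h.symm

theorem perm_add_single [DecidableEq X]
    (hπ : ∀ (u v : X → ℕ) (x : X), π (u + v) x = π (fun z => v ((π u).symm z)) (π u x))
    (u : X → ℕ) (x : X) (n : ℕ) :
    π (u + Pi.single x n) = π (Pi.single (π u x) n) * π u := by
  ext y
  rw [hπ, Pi.single_comp_perm_symm]
  rfl

def periods (π : (X → ℕ) → Equiv.Perm X) : AddSubmonoid (X → ℕ) where
  carrier := {k | ∀ u, π (u + k) = π u}
  zero_mem' := by simp
  add_mem' {k k'} hk hk' u := by
    rw [← add_assoc, hk' (u + k), hk u]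

theorem single_mem_periods [DecidableEq X]
    (hπ : ∀ (u v : X → ℕ) (x : X), π (u + v) x = π (fun z => v ((π u).symm z)) (π u x))
    {p : ℕ} (hp : ∀ x, π (Pi.single x p) = 1) (x : X) : Pi.single x p ∈ periods π := by
  intro u
  rw [perm_add_single hπ, hp, one_mul]

theorem nsmul_mem_periods [Fintype X] [DecidableEq X]
    (hπ : ∀ (u v : X → ℕ) (x : X), π (u + v) x = π (fun z => v ((π u).symm z)) (π u x))
    {p : ℕ} (hp : ∀ x, π (Pi.single x p) = 1) (k : X → ℕ) : p • k ∈ periods π := by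
  rw [← Finset.univ_sum_single k, Finset.smul_sum]
  refine AddSubmonoid.sum_mem _ fun x _ => ?_
  rw [← Pi.single_smul', smul_eq_mul, mul_comm, ← smul_eq_mul, Pi.single_smul']
  exact AddSubmonoid.nsmul_mem _ (single_mem_periods hπ hp x) _

theorem perm_eq_of_modEq [Fintype X] [DecidableEq X]
    (hπ : ∀ (u v : X → ℕ) (x : X), π (u + v) x = π (fun z => v ((π u).symm z)) (π u x))
    {p : ℕ} (hp : ∀ x, π (Pi.single x p) = 1) {u u' : X → ℕ}
    (h : ∀ x, u x ≡ u' x [MOD p]) : π u = π u' := by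
  have hmod (u : X → ℕ) : π u = π (fun x => u x % p) := by
    conv_lhs => rw [show u = (fun x => u x % p) + p • (fun x => u x / p) from
      funext fun x => (Nat.mod_add_div (u x) p).symm]
    exact nsmul_mem_periods hπ hp _ _
  rw [hmod u, hmod u']
  exact congrArg π (funext h)

theorem perm_single_apply [DecidableEq X] {op : X → X → X}
    (hπ : ∀ (u v : X → ℕ) (x : X), π (u + v) x = π (fun z => v ((π u).symm z)) (π u x))
    (hπ₁ : ∀ x, ⇑(π (Pi.single x 1)) = op x) (n : ℕ) (x y : X) :
    π (Pi.single x n) y = PiAux op (List.replicate n x) y := by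
  induction n generalizing y with
  | zero => simp [perm_zero hπ, PiAux]
  | succ n ih =>
    rw [Pi.single_add, perm_add_single hπ, Equiv.Perm.mul_apply, hπ₁, ih, ih, List.replicate_succ,
      PiAux]

end Cocycle

theorem Equiv.Perm.apply_eq_of_forall_ne {X : Type*} {σ : Equiv.Perm X} {f : X → X}
    (hf : Surjective f) {x : X} (h : ∀ y ≠ x, σ y = f y) : σ x = f x := by
  obtain ⟨x', hx'⟩ := hf (σ x)
  obtain rfl : x' = x := by
    by_contra hne
    exact hne (σ.injective (by rw [h x' hne, hx']))
  exact hx'.symm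

section IStructure

variable {X M : Type*} [DecidableEq X] [Monoid M] {ν : (X → ℕ) → M}
  {π : (X → ℕ) → Equiv.Perm X} {gen : X → M}

theorem apply_single_add_single (hone : ν 0 = 1)
    (hstep : ∀ (u : X → ℕ) (x : X), ν (u + Pi.single x 1) = ν u * gen (π u x))
    (hπ : ∀ (u v : X → ℕ) (x : X), π (u + v) x = π (fun z => v ((π u).symm z)) (π u x))
    (x y : X) : ν (Pi.single x 1 + Pi.single y 1) = gen x * gen (π (Pi.single x 1) y) := by
  have hx : ν (Pi.single x 1) = gen x := by simpa [hone, perm_zero hπ] using hstep 0 x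
  rw [hstep, hx]

theorem perm_single_one_apply_of_ne (hone : ν 0 = 1)
    (hstep : ∀ (u : X → ℕ) (x : X), ν (u + Pi.single x 1) = ν u * gen (π u x))
    (hπ : ∀ (u v : X → ℕ) (x : X), π (u + v) x = π (fun z => v ((π u).symm z)) (π u x))
    (hν : Injective ν) {op : X → X → X} (hrel : ∀ x y, gen x * gen (op x y) = gen y * gen (op y x))
    {x y : X} (hxy : x ≠ y) : π (Pi.single x 1) y = op x y := by
  set a := (π (Pi.single x 1)).symm (op x y)
  set b := (π (Pi.single y 1)).symm (op y x)
  have hab : Pi.single x 1 + Pi.single a 1 = (Pi.single y 1 + Pi.single b 1 : X → ℕ) := by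
    apply hν
    rw [apply_single_add_single hone hstep hπ, apply_single_add_single hone hstep hπ,
      Equiv.apply_symm_apply, Equiv.apply_symm_apply, hrel]
  -- the coordinate `y` is positive on the right, so `a = y` on the left
  have hay : a = y := by
    by_contra hne
    have h := congrFun hab y
    simp only [Pi.add_apply, Pi.single_apply, if_neg hxy.symm, if_neg (Ne.symm hne),
      ↓reduceIte] at h
    omega
  have h : π (Pi.single x 1) a = op x y := Equiv.apply_symm_apply _ _
  rwa [hay] at h

theorem perm_single_one (hone : ν 0 = 1)
    (hstep : ∀ (u : X → ℕ) (x : X), ν (u + Pi.single x 1) = ν u * gen (π u x))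
    (hπ : ∀ (u v : X → ℕ) (x : X), π (u + v) x = π (fun z => v ((π u).symm z)) (π u x))
    (hν : Injective ν) {op : X → X → X} (hrel : ∀ x y, gen x * gen (op x y) = gen y * gen (op y x))
    (hop : ∀ x, Surjective (op x)) (x : X) : ⇑(π (Pi.single x 1)) = op x := by
  have hne : ∀ y ≠ x, π (Pi.single x 1) y = op x y :=
    fun y hy => perm_single_one_apply_of_ne hone hstep hπ hν hrel hy.symm
  funext y
  by_cases hy : y = x
  · subst hy
    exact Equiv.Perm.apply_eq_of_forall_ne (hop y) hne
  · exact hne y hy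

end IStructure

theorem PresentedMonoid.of_mul_of_op {X : Type*} (op : X → X → X) (x y : X) :
    of (structRels op) x * of (structRels op) (op x y) =
      of (structRels op) y * of (structRels op) (op y x) :=
  (Con.eq _).2 (ConGen.Rel.of _ _ ⟨x, y, rfl, rfl⟩)

theorem Equiv.symm_mul_eq_add_comp_perm {X M : Type*} [Monoid M] {e : (X → ℕ) ≃ M}
    {π : (X → ℕ) → Equiv.Perm X}
    (hprod : ∀ u v : X → ℕ, e (u + v) = e u * e (fun x => v ((π u).symm x))) (g h : M) :
    e.symm (g * h) = e.symm g + fun x => e.symm h (π (e.symm g) x) := by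
  rw [e.symm_apply_eq, hprod]
  simp only [Equiv.apply_symm_apply]

theorem stmt15_general {X : Type*} [Fintype X] [DecidableEq X] (op : X → X → X)
    (hL : ∀ x : X, Function.Bijective (op x))
    (p : ℕ)
    (hclass : ∀ x y : X, PiAux op (List.replicate p x) y = y)
    (ν : (X → ℕ) → PresentedMonoid (structRels op))
    (hν : Function.Bijective ν) (hone : ν 0 = 1)
    (π : (X → ℕ) → Equiv.Perm X)
    (hstep : ∀ (u : X → ℕ) (x : X),
      ν (u + Pi.single x 1) = ν u * PresentedMonoid.of (structRels op) (π u x))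
    (hprod : ∀ u v : X → ℕ, ν (u + v) = ν u * ν (fun x => v ((π u).symm x)))
    (hperm : ∀ (u v : X → ℕ) (x : X),
      π (u + v) x = π (fun z => v ((π u).symm z)) (π u x)) :
    Equivalence (fun g g' : PresentedMonoid (structRels op) =>
      ∀ x : X, (Equiv.ofBijective ν hν).symm g x ≡ (Equiv.ofBijective ν hν).symm g' x [MOD p]) ∧
    ∀ g g' h : PresentedMonoid (structRels op),
      (∀ x : X, (Equiv.ofBijective ν hν).symm g x
          ≡ (Equiv.ofBijective ν hν).symm g' x [MOD p]) →
      (∀ x : X, (Equiv.ofBijective ν hν).symm (h * g) x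
          ≡ (Equiv.ofBijective ν hν).symm (h * g') x [MOD p]) ∧
      (∀ x : X, (Equiv.ofBijective ν hν).symm (g * h) x
          ≡ (Equiv.ofBijective ν hν).symm (g' * h) x [MOD p]) := by
  have hπ₁ := perm_single_one hone hstep hperm hν.injective (PresentedMonoid.of_mul_of_op op)
    fun x => (hL x).surjective
  have hπp (x : X) : π (Pi.single x p) = 1 :=
    Equiv.ext fun y => (perm_single_apply hperm hπ₁ p x y).trans (hclass x y)
  have hmul := Equiv.symm_mul_eq_add_comp_perm (e := Equiv.ofBijective ν hν) hprod
  refine ⟨⟨fun _ _ => .refl _, fun h x => (h x).symm, fun h h' x => (h x).trans (h' x)⟩,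
    fun g g' h hg => ⟨fun x => ?_, fun x => ?_⟩⟩
  · rw [hmul, hmul]
    exact (hg _).add_left _
  · rw [hmul, hmul, perm_eq_of_modEq hperm hπp hg]
    exact (hg x).add_right _

/-- in the structure monoid `M` of a finite RC-quasigroup of class `p`, the
relation `g ≡ g'` defined by `ν⁻¹(g) ≡_p ν⁻¹(g')` (all coordinates congruent mod `p`) is an
equivalence relation compatible with left- and right-multiplication, i.e. a congruence. -/
theorem stmt15 {X : Type*} [Fintype X] [DecidableEq X] (op : X → X → X)
    (hRC : ∀ x y z : X, op (op x y) (op x z) = op (op y x) (op y z))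
    (hL : ∀ x : X, Function.Bijective (op x))
    (p : ℕ) (hp : 0 < p)
    (hclass : ∀ x y : X, PiAux op (List.replicate p x) y = y)
    (ν : (X → ℕ) → PresentedMonoid (structRels op))
    (hν : Function.Bijective ν) (hone : ν 0 = 1)
    (π : (X → ℕ) → Equiv.Perm X)
    (hstep : ∀ (u : X → ℕ) (x : X),
      ν (u + Pi.single x 1) = ν u * PresentedMonoid.of (structRels op) (π u x))
    (hprod : ∀ u v : X → ℕ, ν (u + v) = ν u * ν (fun x => v ((π u).symm x)))
    (hperm : ∀ (u v : X → ℕ) (x : X),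
      π (u + v) x = π (fun z => v ((π u).symm z)) (π u x)) :
    Equivalence (fun g g' : PresentedMonoid (structRels op) =>
      ∀ x : X, (Equiv.ofBijective ν hν).symm g x ≡ (Equiv.ofBijective ν hν).symm g' x [MOD p]) ∧
    ∀ g g' h : PresentedMonoid (structRels op),
      (∀ x : X, (Equiv.ofBijective ν hν).symm g x
          ≡ (Equiv.ofBijective ν hν).symm g' x [MOD p]) →
      (∀ x : X, (Equiv.ofBijective ν hν).symm (h * g) x
          ≡ (Equiv.ofBijective ν hν).symm (h * g') x [MOD p]) ∧
      (∀ x : X, (Equiv.ofBijective ν hν).symm (g * h) x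
          ≡ (Equiv.ofBijective ν hν).symm (g' * h) x [MOD p]) :=
  stmt15_general op hL p hclass ν hν hone π hstep hprod hperm
end

section
/- Let G be the structure group of a finite RC-quasigroup (X, ⊳) of class p, and W = G/≡ the finite quotient of order pⁿ. Then a presentation of W is obtained by adding to the presentation ⟨X | x(x⊳y) = y(y⊳x)⟩ of G the n relations w_x = 1 for x ∈ X, where w_x = x · (x⊳x) · ((x⊳x)⊳(x⊳x)) ⋯ is the length-p word whose letters are the iterates of y ↦ y ⊳ y starting at x. -/
/-- The relators `x(x ⊳ y)(y(y ⊳ x))⁻¹` presenting the structure group of `(X, ⊳)`. -/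
def structGroupRels {X : Type*} (op : X → X → X) : Set (FreeGroup X) :=
  { r | ∃ x y : X, r = FreeGroup.of x * FreeGroup.of (op x y)
      * (FreeGroup.of y * FreeGroup.of (op y x))⁻¹ }

/-!
In any group with a map `f` satisfying `f x * f (x ⊳ y) = f y * f (y ⊳ x)`, induction on `k`
with the RC law gives `x^{[k]} * f (Π_{k+1}(x, …, x, y)) = f y * (y ⊳ x)^{[k]}`. In class `p`
the `Π`-term is `y`, so conjugation by the generator `y` sends `(y ⊳ x)^{[p]}` to `x^{[p]}`;
since `y ⊳ ·` is bijective, every generator permutes the set of the `x^{[p]}`, and the subgroup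
they generate is already normal. The presentation of `W` is the third isomorphism theorem: adding
relators `T` to `⟨X ∣ R⟩` is quotienting by the normal closure of the image of `T`.
-/

open Subgroup Pointwise

theorem Subgroup.normalClosure_eq_closure_of_conj_image_eq {G : Type*} [Group G] {A S : Set G}
    (hA : closure A = ⊤) (hS : ∀ a ∈ A, (fun s => a * s * a⁻¹) '' S = S) :
    normalClosure S = closure S := by
  have hconj : ∀ g : G, ConjAct.toConjAct g • S = S := by
    have hA_le : closure A ≤ (MulAction.stabilizer (ConjAct G) S).comap
        (ConjAct.toConjAct : G ≃* ConjAct G).toMonoidHom := by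
      refine (closure_le _).2 fun a ha => ?_
      rw [SetLike.mem_coe, mem_comap, MulAction.mem_stabilizer_iff]
      simpa [← Set.image_smul, ConjAct.smul_def] using hS a ha
    exact fun g => hA_le (hA ▸ mem_top g)
  refine le_antisymm (closure_mono fun x hx => ?_) closure_le_normalClosure
  obtain ⟨s, hs, c, rfl⟩ := by simpa only [Group.mem_conjugatesOfSet_iff, isConj_iff] using hx
  rw [← hconj c]
  exact ⟨s, hs, ConjAct.smul_def _ _⟩

theorem PresentedGroup.map_mk_normalClosure_union {α : Type*} (R T : Set (FreeGroup α)) :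
    (normalClosure (R ∪ T)).map (PresentedGroup.mk R)
      = normalClosure (PresentedGroup.mk R '' T) := by
  rw [map_normalClosure _ _ (PresentedGroup.mk_surjective R), Set.image_union, normalClosure_union,
    normalClosure_eq_bot_iff.2, bot_sup_eq]
  rintro _ ⟨r, hr, rfl⟩
  exact PresentedGroup.one_of_mem hr

def PresentedGroup.quotientNormalClosureEquiv {α : Type*} (R T : Set (FreeGroup α)) :
    PresentedGroup R ⧸ normalClosure (PresentedGroup.mk R '' T) ≃* PresentedGroup (R ∪ T) :=
  have : ((normalClosure (R ∪ T)).map (PresentedGroup.mk R)).Normal :=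
    normalClosure_normal.map _ (PresentedGroup.mk_surjective R)
  (QuotientGroup.quotientMulEquivOfEq (PresentedGroup.map_mk_normalClosure_union R T).symm).trans
    (QuotientGroup.quotientQuotientEquivQuotient _ _ (normalClosure_mono Set.subset_union_left))

section RCQuasigroup

variable {X : Type*} (op : X → X → X)

theorem piAux_append_singleton (a y : X) (l : List X) :
    PiAux op (l ++ [a]) y = PiAux op (l.map (op a)) (op a y) := by
  induction l generalizing y with
  | nil => rfl
  | cons b l ih => simp only [List.cons_append, PiAux, ih, List.map_cons]

theorem piAux_replicate_succ (k : ℕ) (x y : X) :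
    PiAux op (List.replicate (k + 1) x) y = PiAux op (List.replicate k (op x x)) (op x y) := by
  rw [List.replicate_succ', piAux_append_singleton, List.map_replicate]

variable {H : Type*} [Monoid H] (f : X → H)

/-- The paper's `x^{[k]}`, for an arbitrary map `f` of the letters into a monoid. -/
def bracketPow (k : ℕ) (x : X) : H :=
  ((List.range k).map fun j => f ((fun y => op y y)^[j] x)).prod

theorem range_bracketPow (k : ℕ) :
    Set.range (bracketPow op f k)
      = {g | ∃ x, g = ((List.range k).map fun j => f ((fun y => op y y)^[j] x)).prod} :=
  Set.ext fun _ => exists_congr fun _ => eq_comm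

theorem bracketPow_succ (k : ℕ) (x : X) :
    bracketPow op f (k + 1) x = f x * bracketPow op f k (op x x) := by
  simp only [bracketPow, List.range_succ_eq_map, List.map_cons, List.map_map, List.prod_cons,
    Function.comp_def, Function.iterate_succ_apply, Function.iterate_zero_apply]

theorem map_bracketPow {K F : Type*} [Monoid K] [FunLike F H K] [MonoidHomClass F H K] (φ : F)
    (k : ℕ) (x : X) : φ (bracketPow op f k x) = bracketPow op (φ ∘ f) k x := by
  simp only [bracketPow, map_list_prod, List.map_map, Function.comp_def]

variable {op f}

theorem bracketPow_mul_piAux (hRC : ∀ x y z : X, op (op x y) (op x z) = op (op y x) (op y z))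
    (hf : ∀ x y, f x * f (op x y) = f y * f (op y x)) (k : ℕ) (x y : X) :
    bracketPow op f k x * f (PiAux op (List.replicate k x) y)
      = f y * bracketPow op f k (op y x) := by
  induction k generalizing x y with
  | zero => simp [bracketPow, PiAux]
  | succ k ih =>
    calc bracketPow op f (k + 1) x * f (PiAux op (List.replicate (k + 1) x) y)
        = f x * f (op x y) * bracketPow op f k (op (op x y) (op x x)) := by
          rw [bracketPow_succ, piAux_replicate_succ, mul_assoc, ih, mul_assoc]
      _ = f y * bracketPow op f (k + 1) (op y x) := by
          rw [hf, hRC, mul_assoc, bracketPow_succ]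

theorem bracketPow_mul_of_class (hRC : ∀ x y z : X, op (op x y) (op x z) = op (op y x) (op y z))
    (hf : ∀ x y, f x * f (op x y) = f y * f (op y x)) {p : ℕ}
    (hclass : ∀ x y : X, PiAux op (List.replicate p x) y = y) (x y : X) :
    bracketPow op f p x * f y = f y * bracketPow op f p (op y x) := by
  simpa only [hclass] using bracketPow_mul_piAux hRC hf p x y

theorem conj_image_range_bracketPow {G : Type*} [Group G] {f : X → G}
    (hRC : ∀ x y z : X, op (op x y) (op x z) = op (op y x) (op y z))
    (hsurj : ∀ y, Function.Surjective (op y))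
    (hf : ∀ x y, f x * f (op x y) = f y * f (op y x)) {p : ℕ}
    (hclass : ∀ x y : X, PiAux op (List.replicate p x) y = y) (y : X) :
    (fun s => f y * s * (f y)⁻¹) '' Set.range (bracketPow op f p)
      = Set.range (bracketPow op f p) := by
  have hconj :
      (fun s => f y * s * (f y)⁻¹) ∘ bracketPow op f p ∘ op y = bracketPow op f p := by
    funext x
    simp only [Function.comp_apply, ← bracketPow_mul_of_class hRC hf hclass, mul_inv_cancel_right]
  conv_rhs => rw [← hconj, Set.range_comp, (hsurj y).range_comp]

end RCQuasigroup

theorem structGroup_of_mul_of {X : Type*} (op : X → X → X) (x y : X) :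
    (PresentedGroup.of x : PresentedGroup (structGroupRels op)) * PresentedGroup.of (op x y)
      = PresentedGroup.of y * PresentedGroup.of (op y x) := by
  have h := PresentedGroup.mk_eq_mk_of_mul_inv_mem (rels := structGroupRels op) ⟨x, y, rfl⟩
  rwa [map_mul, map_mul] at h

theorem stmt17_general {X : Type*} (op : X → X → X)
    (hRC : ∀ x y z : X, op (op x y) (op x z) = op (op y x) (op y z))
    (hL : ∀ x : X, Function.Bijective (op x))
    (p : ℕ)
    (hclass : ∀ x y : X, PiAux op (List.replicate p x) y = y) :
    Subgroup.normalClosure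
        {g : PresentedGroup (structGroupRels op) | ∃ x : X,
          g = ((List.range p).map (fun k =>
            PresentedGroup.of (rels := structGroupRels op) ((fun y => op y y)^[k] x))).prod}
      = Subgroup.closure
        {g : PresentedGroup (structGroupRels op) | ∃ x : X,
          g = ((List.range p).map (fun k =>
            PresentedGroup.of (rels := structGroupRels op) ((fun y => op y y)^[k] x))).prod} ∧
    Nonempty ((PresentedGroup (structGroupRels op) ⧸ Subgroup.normalClosure
        {g : PresentedGroup (structGroupRels op) | ∃ x : X,
          g = ((List.range p).map (fun k =>
            PresentedGroup.of (rels := structGroupRels op) ((fun y => op y y)^[k] x))).prod})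
      ≃* PresentedGroup (structGroupRels op ∪
        {r : FreeGroup X | ∃ x : X,
          r = ((List.range p).map (fun k => FreeGroup.of ((fun y => op y y)^[k] x))).prod})) := by
  rw [← range_bracketPow op PresentedGroup.of, ← range_bracketPow op FreeGroup.of]
  refine ⟨normalClosure_eq_closure_of_conj_image_eq (PresentedGroup.closure_range_of _) ?_,
    ⟨?_⟩⟩
  · rintro _ ⟨y, rfl⟩
    exact conj_image_range_bracketPow hRC (fun y => (hL y).2) (structGroup_of_mul_of op) hclass y
  · have hmk : PresentedGroup.mk _ '' Set.range (bracketPow op FreeGroup.of p)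
        = Set.range (bracketPow op (PresentedGroup.of (rels := structGroupRels op)) p) := by
      rw [← Set.range_comp]
      exact congrArg Set.range (funext (map_bracketPow op FreeGroup.of _ p))
    exact hmk ▸ PresentedGroup.quotientNormalClosureEquiv _ _

/-- let `G` be the structure group of an RC-quasigroup `(X, ⊳)` of size `n`
and class `p`, and `W = G/≡` the quotient of `G` by the subgroup generated by the elements
`x^{[p]}`, i.e. by the images of the length-`p` words
`w_x = x·(x⊳x)·((x⊳x)⊳(x⊳x))⋯` (letters the iterates of `y ↦ y ⊳ y` starting at `x`).
Then the subgroup generated by the `w_x` equals their normal closure, and `W` is presented by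
adding the `n` relations `w_x = 1` to the presentation `⟨X ∣ x(x⊳y) = y(y⊳x)⟩` of `G`. -/
theorem stmt17 {X : Type*} [Fintype X] [DecidableEq X] (op : X → X → X)
    (hRC : ∀ x y z : X, op (op x y) (op x z) = op (op y x) (op y z))
    (hL : ∀ x : X, Function.Bijective (op x))
    (p : ℕ) (hp : 0 < p)
    (hclass : ∀ x y : X, PiAux op (List.replicate p x) y = y) :
    Subgroup.normalClosure
        {g : PresentedGroup (structGroupRels op) | ∃ x : X,
          g = ((List.range p).map (fun k =>
            PresentedGroup.of (rels := structGroupRels op) ((fun y => op y y)^[k] x))).prod}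
      = Subgroup.closure
        {g : PresentedGroup (structGroupRels op) | ∃ x : X,
          g = ((List.range p).map (fun k =>
            PresentedGroup.of (rels := structGroupRels op) ((fun y => op y y)^[k] x))).prod} ∧
    Nonempty ((PresentedGroup (structGroupRels op) ⧸ Subgroup.normalClosure
        {g : PresentedGroup (structGroupRels op) | ∃ x : X,
          g = ((List.range p).map (fun k =>
            PresentedGroup.of (rels := structGroupRels op) ((fun y => op y y)^[k] x))).prod})
      ≃* PresentedGroup (structGroupRels op ∪
        {r : FreeGroup X | ∃ x : X,
          r = ((List.range p).map (fun k => FreeGroup.of ((fun y => op y y)^[k] x))).prod})) :=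
  stmt17_general op hRC hL p hclass
end
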